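/- arXiv:1710.07258 — 10 statements merged into one kernel-verified Lean document; each statement's English description precedes it below -/
import Mathlib

section
/- Let X be a set equipped with a well-quasi-ordering ≤. Then every downwards-closed subset D ⊆ X can be written as a finite union D = I₁ ∪ I₂ ∪ ⋯ ∪ Iₙ of ideals I₁, …, Iₙ of X. -/
/-- A quasi-ordered set is a well-quasi-ordering if every infinite sequence
contains an increasing pair. -/
def IsWqo (X : Type*) [Preorder X] : Prop :=
  ∀ f : ℕ → X, ∃ i j : ℕ, i < j ∧ f i ≤ f j

/-- A subset is downwards-closed if it is closed under going down. -/
def DownwardsClosed {X : Type*} [Preorder X] (D : Set X) : Prop :=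
  ∀ ⦃x y : X⦄, x ≤ y → y ∈ D → x ∈ D

/-- An ideal is a nonempty, directed, downwards-closed subset. -/
def IsIdeal {X : Type*} [Preorder X] (I : Set X) : Prop :=
  I.Nonempty ∧ DownwardsClosed I ∧
    ∀ ⦃x⦄, x ∈ I → ∀ ⦃y⦄, y ∈ I → ∃ z ∈ I, x ≤ z ∧ y ≤ z

/-- In a wqo, strict inclusion of downwards-closed sets is well-founded. -/
lemma wf_ssubset_downwardsClosed {X : Type*} [Preorder X] (hX : IsWqo X) :
    WellFounded (fun A B : {D : Set X // DownwardsClosed D} => A.1 ⊂ B.1) := by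
  haveI : IsStrictOrder {D : Set X // DownwardsClosed D} (fun A B => A.1 ⊂ B.1) :=
    { irrefl := fun A => ssubset_irrefl A.1,
      trans := fun _ _ _ h1 h2 => h1.trans h2 }
  rw [RelEmbedding.wellFounded_iff_isEmpty]
  constructor
  intro f
  set g : ℕ → Set X := fun n => (f n).1 with hg
  have hanti : StrictAnti g := strictAnti_nat_of_succ_lt fun n =>
    (f.map_rel_iff.2 (Nat.lt_succ_self n) : (f (n+1)).1 ⊂ (f n).1)
  have hex : ∀ n, ∃ x, x ∈ g n \ g (n + 1) := fun n =>
    Set.exists_of_ssubset (hanti (Nat.lt_succ_self n))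
  choose x hx using hex
  obtain ⟨i, j, hij, hle⟩ := hX x
  have h1 : g j ⊆ g (i + 1) := hanti.antitone hij
  have h2 : x i ∈ g (i + 1) := (f (i + 1)).2 hle (h1 (hx j).1)
  exact (hx i).2 h2

/-- Every downwards-closed subset of a wqo is a finite union of ideals. -/
theorem downwardsClosed_eq_finite_union_of_ideals
    {X : Type*} [Preorder X] (hX : IsWqo X)
    (D : Set X) (hD : DownwardsClosed D) :
    ∃ S : Finset (Set X), (∀ I ∈ S, IsIdeal I) ∧ D = ⋃ I ∈ S, (I : Set X) := by
  classical
  refine (wf_ssubset_downwardsClosed hX).induction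
    (C := fun A : {D : Set X // DownwardsClosed D} =>
      ∃ S : Finset (Set X), (∀ I ∈ S, IsIdeal I) ∧ A.1 = ⋃ I ∈ S, (I : Set X))
    ⟨D, hD⟩ ?_
  rintro ⟨A, hA⟩ IH
  rcases A.eq_empty_or_nonempty with rfl | hne
  · exact ⟨∅, by simp, by simp⟩
  by_cases hdir : ∀ ⦃x⦄, x ∈ A → ∀ ⦃y⦄, y ∈ A → ∃ z ∈ A, x ≤ z ∧ y ≤ z
  · exact ⟨{A}, by simpa using ⟨hne, hA, hdir⟩, by simp⟩
  · push_neg at hdir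
    obtain ⟨a, ha, b, hb, hub⟩ := hdir
    set A₁ : Set X := {x ∈ A | ¬ a ≤ x} with hA₁
    set A₂ : Set X := {x ∈ A | ¬ b ≤ x} with hA₂
    have hdc₁ : DownwardsClosed A₁ := fun x y hxy hy =>
      ⟨hA hxy hy.1, fun h => hy.2 (h.trans hxy)⟩
    have hdc₂ : DownwardsClosed A₂ := fun x y hxy hy =>
      ⟨hA hxy hy.1, fun h => hy.2 (h.trans hxy)⟩
    have hss₁ : A₁ ⊂ A := ⟨fun x hx => hx.1, fun h => (h ha).2 le_rfl⟩
    have hss₂ : A₂ ⊂ A := ⟨fun x hx => hx.1, fun h => (h hb).2 le_rfl⟩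
    obtain ⟨S₁, hS₁, hU₁⟩ := IH ⟨A₁, hdc₁⟩ hss₁
    obtain ⟨S₂, hS₂, hU₂⟩ := IH ⟨A₂, hdc₂⟩ hss₂
    refine ⟨S₁ ∪ S₂, fun I hI => ?_, ?_⟩
    · rcases Finset.mem_union.1 hI with h | h
      · exact hS₁ I h
      · exact hS₂ I h
    · have hcover : A = A₁ ∪ A₂ := by
        ext x
        constructor
        · intro hx
          by_cases hax : a ≤ x
          · exact Or.inr ⟨hx, fun hbx => hub x hx hax hbx⟩
          · exact Or.inl ⟨hx, hax⟩
        · rintro (hx | hx) <;> exact hx.1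
      show A = _
      rw [Finset.set_biUnion_union]
      exact hcover.trans (congrArg₂ (· ∪ ·) hU₁ hU₂)
end

section
/- Let X be a set equipped with a well-quasi-ordering ≤ and let D ⊆ X be downwards-closed. Then the set Idl(D) of ideals of X that are contained in D and are maximal with respect to inclusion among ideals contained in D is finite, and D is the union of the ideals in Idl(D). -/
/-- The ideal decomposition of `D`: the ideals included in `D` that are maximal
with respect to inclusion among ideals included in `D`. -/
def idealDecomp {X : Type*} [Preorder X] (D : Set X) : Set (Set X) :=
  {I | IsIdeal I ∧ I ⊆ D ∧ ∀ J : Set X, IsIdeal J → J ⊆ D → I ⊆ J → I = J}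

/-!
In a wqo there is no infinite strictly decreasing chain of downwards-closed sets (pick a witness
of each strict inclusion and apply the wqo property to the witnesses), so one can argue by
well-founded induction on `D`. If `D` is empty or directed it is a finite union of ideals;
otherwise two of its elements `a`, `b` have no common upper bound in `D`, and `D` is the union of
the strictly smaller downwards-closed sets `{x ∈ D | ¬ a ≤ x}` and `{x ∈ D | ¬ b ≤ x}`.

Ideals are prime: an ideal covered by finitely many downwards-closed sets lies in one of them.
Hence every ideal contained in `D` lies in a member of a finite ideal cover `S` of `D`, and the
maximal ideals contained in `D` are exactly the maximal members of `S`.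
-/

section IdealDecomposition

variable {X : Type*} [Preorder X]

lemma downwardsClosed_sUnion {S : Set (Set X)} (hS : ∀ A ∈ S, DownwardsClosed A) :
    DownwardsClosed (⋃₀ S) :=
  fun _ _ hxy ⟨A, hA, hy⟩ => ⟨A, hA, hS A hA hxy hy⟩

lemma DownwardsClosed.sep_not_le {D : Set X} (hD : DownwardsClosed D) (a : X) :
    DownwardsClosed {x ∈ D | ¬ a ≤ x} :=
  fun _ _ hxy ⟨hy, hay⟩ => ⟨hD hxy hy, fun hax => hay (hax.trans hxy)⟩

lemma sep_not_le_ssubset {D : Set X} {a : X} (ha : a ∈ D) : {x ∈ D | ¬ a ≤ x} ⊂ D :=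
  ⟨Set.sep_subset _ _, fun h => (h ha).2 le_rfl⟩

lemma sep_not_le_union_sep_not_le {D : Set X} {a b : X} (hab : ∀ z ∈ D, a ≤ z → ¬ b ≤ z) :
    {x ∈ D | ¬ a ≤ x} ∪ {x ∈ D | ¬ b ≤ x} = D := by
  ext x
  constructor
  · rintro (hx | hx) <;> exact hx.1
  · intro hx
    by_cases hax : a ≤ x
    · exact Or.inr ⟨hx, hab x hx hax⟩
    · exact Or.inl ⟨hx, hax⟩

theorem IsWqo.wellFounded_downwardsClosed_ssubset (hX : IsWqo X) :
    WellFounded (fun A B : Set X => DownwardsClosed A ∧ A ⊂ B) := by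
  refine wellFounded_iff_isEmpty_descending_chain.2 ⟨fun ⟨e, he⟩ => ?_⟩
  have e_anti : Antitone e := antitone_nat_of_succ_le fun n => (he n).2.subset
  choose x hx_mem hx_not_mem using fun n => Set.exists_of_ssubset (he n).2
  obtain ⟨i, j, hij, hle⟩ := hX x
  exact hx_not_mem i ((he i).1 hle (e_anti hij (hx_mem j)))

theorem IsWqo.exists_finite_ideal_cover (hX : IsWqo X) {D : Set X} (hD : DownwardsClosed D) :
    ∃ S : Set (Set X), S.Finite ∧ (∀ I ∈ S, IsIdeal I ∧ I ⊆ D) ∧ ⋃₀ S = D := by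
  induction D using hX.wellFounded_downwardsClosed_ssubset.induction with
  | _ D ih =>
  rcases D.eq_empty_or_nonempty with rfl | hne
  · exact ⟨∅, Set.finite_empty, by simp, Set.sUnion_empty⟩
  by_cases hdir : ∀ ⦃x⦄, x ∈ D → ∀ ⦃y⦄, y ∈ D → ∃ z ∈ D, x ≤ z ∧ y ≤ z
  · refine ⟨{D}, Set.finite_singleton D, ?_, Set.sUnion_singleton D⟩
    rintro I rfl
    exact ⟨⟨hne, hD, hdir⟩, subset_rfl⟩
  push Not at hdir
  obtain ⟨a, ha, b, hb, hab⟩ := hdir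
  obtain ⟨S₁, hS₁fin, hS₁, hU₁⟩ :=
    ih _ ⟨hD.sep_not_le a, sep_not_le_ssubset ha⟩ (hD.sep_not_le a)
  obtain ⟨S₂, hS₂fin, hS₂, hU₂⟩ :=
    ih _ ⟨hD.sep_not_le b, sep_not_le_ssubset hb⟩ (hD.sep_not_le b)
  refine ⟨S₁ ∪ S₂, hS₁fin.union hS₂fin, ?_, ?_⟩
  · rintro I (hI | hI)
    · exact ⟨(hS₁ I hI).1, (hS₁ I hI).2.trans (Set.sep_subset _ _)⟩
    · exact ⟨(hS₂ I hI).1, (hS₂ I hI).2.trans (Set.sep_subset _ _)⟩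
  · rw [Set.sUnion_union, hU₁, hU₂, sep_not_le_union_sep_not_le hab]

theorem IsIdeal.subset_or_subset_of_subset_union {I A B : Set X} (hI : IsIdeal I)
    (hA : DownwardsClosed A) (hB : DownwardsClosed B) (h : I ⊆ A ∪ B) : I ⊆ A ∨ I ⊆ B := by
  by_contra! ⟨hIA, hIB⟩
  obtain ⟨x, hxI, hxA⟩ := Set.not_subset.1 hIA
  obtain ⟨y, hyI, hyB⟩ := Set.not_subset.1 hIB
  obtain ⟨z, hzI, hxz, hyz⟩ := hI.2.2 hxI hyI
  rcases h hzI with hzA | hzB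
  · exact hxA (hA hxz hzA)
  · exact hyB (hB hyz hzB)

theorem IsIdeal.exists_subset_of_subset_sUnion {I : Set X} (hI : IsIdeal I)
    {S : Set (Set X)} (hSfin : S.Finite) (hS : ∀ A ∈ S, DownwardsClosed A) (h : I ⊆ ⋃₀ S) :
    ∃ A ∈ S, I ⊆ A := by
  induction S, hSfin using Set.Finite.induction_on with
  | empty =>
    obtain ⟨x, hx⟩ := hI.1
    simpa using h hx
  | @insert A S _ _ ih =>
    have hS' : ∀ B ∈ S, DownwardsClosed B := fun B hB => hS B (Set.mem_insert_of_mem A hB)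
    rw [Set.sUnion_insert] at h
    rcases hI.subset_or_subset_of_subset_union (hS A (Set.mem_insert A S))
      (downwardsClosed_sUnion hS') h with hIA | hIS
    · exact ⟨A, Set.mem_insert A S, hIA⟩
    · obtain ⟨B, hB, hIB⟩ := ih hS' hIS
      exact ⟨B, Set.mem_insert_of_mem A hB, hIB⟩

theorem idealDecomp_eq_setOf_maximal {D : Set X} {S : Set (Set X)}
    (hS : ∀ I ∈ S, IsIdeal I ∧ I ⊆ D) (hcof : ∀ I, IsIdeal I → I ⊆ D → ∃ A ∈ S, I ⊆ A) :
    idealDecomp D = {I | Maximal (· ∈ S) I} := by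
  ext J
  constructor
  · rintro ⟨hJ, hJD, hJmax⟩
    obtain ⟨A, hAS, hJA⟩ := hcof J hJ hJD
    obtain rfl : J = A := hJmax A (hS A hAS).1 (hS A hAS).2 hJA
    exact ⟨hAS, fun B hBS hJB => (hJmax B (hS B hBS).1 (hS B hBS).2 hJB).ge⟩
  · rintro ⟨hJS, hJmax⟩
    refine ⟨(hS J hJS).1, (hS J hJS).2, fun K hK hKD hJK => ?_⟩
    obtain ⟨M, hMS, hKM⟩ := hcof K hK hKD
    exact hJK.antisymm (hKM.trans (hJmax hMS (hJK.trans hKM)))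

end IdealDecomposition

/-- For a downwards-closed subset `D` of a wqo, the ideal decomposition of `D`
is finite and its union is `D`. -/
theorem idealDecomp_finite_and_union
    {X : Type*} [Preorder X] (hX : IsWqo X)
    (D : Set X) (hD : DownwardsClosed D) :
    (idealDecomp D).Finite ∧ D = ⋃₀ idealDecomp D := by
  obtain ⟨S, hSfin, hS, hSD⟩ := hX.exists_finite_ideal_cover hD
  have hcof : ∀ I, IsIdeal I → I ⊆ D → ∃ A ∈ S, I ⊆ A := fun I hI hID =>
    hI.exists_subset_of_subset_sUnion hSfin (fun A hA => (hS A hA).1.2.1) (hSD ▸ hID)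
  rw [idealDecomp_eq_setOf_maximal hS hcof]
  refine ⟨hSfin.subset fun J hJ => hJ.1, subset_antisymm ?_ ?_⟩
  · rw [← hSD]
    rintro x ⟨A, hAS, hxA⟩
    obtain ⟨J, hAJ, hJ⟩ := hSfin.exists_le_maximal hAS
    exact ⟨J, hJ, hAJ hxA⟩
  · rintro x ⟨J, hJ, hxJ⟩
    exact (hS J hJ.1).2 hxJ
end

section
/- Let d ≥ 1 and order ℕ^d componentwise. For every n ∈ ℕ, the n-th level Lim^n(ℕ^d) of the ideals of ℕ^d is exactly the set of ideals I of ℕ^d whose ω-representation has at least n occurrences of ω, i.e., the set of ideals that are unbounded in at least n coordinates. In particular, Lim^{d+1}(ℕ^d) = ∅. -/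
/-- The levels of the ideal completion: `Lim X 0` is the set of all ideals, and
`Lim X (n+1)` is the set of unions of acceleration candidates (infinite strictly
increasing sequences) of members of `Lim X n`. -/
def Lim (X : Type*) [Preorder X] : ℕ → Set (Set X)
  | 0 => {I : Set X | IsIdeal I}
  | n + 1 => {J : Set X | ∃ f : ℕ → Set X,
      (∀ i, f i ∈ Lim X n) ∧ (∀ i, f i ⊂ f (i + 1)) ∧ J = ⋃ i, f i}

/-- An ideal of `ℕ^d` is unbounded in coordinate `i` (its ω-representation has
`ω` at position `i`) if its projection on coordinate `i` has no upper bound. -/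
def UnboundedCoord {d : ℕ} (I : Set (Fin d → ℕ)) (i : Fin d) : Prop :=
  ¬ ∃ b : ℕ, ∀ x ∈ I, x i ≤ b

section Aux
variable {d : ℕ}

lemma zero_mem_ideal {I : Set (Fin d → ℕ)} (hI : IsIdeal I) : (0 : Fin d → ℕ) ∈ I := by
  obtain ⟨⟨x, hx⟩, hdc, -⟩ := hI
  exact hdc (fun k => Nat.zero_le _) hx

lemma sup_mem_ideal {I : Set (Fin d → ℕ)} (hI : IsIdeal I) {x y : Fin d → ℕ}
    (hx : x ∈ I) (hy : y ∈ I) : x ⊔ y ∈ I := by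
  obtain ⟨-, hdc, hdir⟩ := hI
  obtain ⟨z, hz, hxz, hyz⟩ := hdir hx hy
  exact hdc (sup_le hxz hyz) hz

lemma mem_of_proj {I : Set (Fin d → ℕ)} (hI : IsIdeal I) {x : Fin d → ℕ}
    (h : ∀ k, ∃ y ∈ I, x k ≤ y k) : x ∈ I := by
  choose y hy hle using h
  have hz : Finset.univ.sup y ∈ I :=
    Finset.sup_mem I (zero_mem_ideal hI) (fun a ha b hb => sup_mem_ideal hI ha hb)
      _ y (fun k _ => hy k)
  refine hI.2.1 (fun k => ?_) hz
  exact le_trans (hle k) ((Finset.le_sup (Finset.mem_univ k) : y k ≤ Finset.univ.sup y) k)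

lemma unbounded_mono {I J : Set (Fin d → ℕ)} (h : I ⊆ J) {k : Fin d}
    (hk : UnboundedCoord I k) : UnboundedCoord J k :=
  fun ⟨b, hb⟩ => hk ⟨b, fun x hx => hb x (h hx)⟩

lemma iUnion_ideal {f : ℕ → Set (Fin d → ℕ)} (hid : ∀ i, IsIdeal (f i))
    (hmono : Monotone f) : IsIdeal (⋃ i, f i) := by
  refine ⟨⟨0, Set.mem_iUnion.2 ⟨0, zero_mem_ideal (hid 0)⟩⟩, ?_, ?_⟩
  · intro x y hxy hy
    obtain ⟨i, hi⟩ := Set.mem_iUnion.1 hy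
    exact Set.mem_iUnion.2 ⟨i, (hid i).2.1 hxy hi⟩
  · intro x hx y hy
    obtain ⟨i, hi⟩ := Set.mem_iUnion.1 hx
    obtain ⟨j, hj⟩ := Set.mem_iUnion.1 hy
    obtain ⟨z, hz, hxz, hyz⟩ := (hid (max i j)).2.2
      (hmono (le_max_left i j) hi) (hmono (le_max_right i j) hj)
    exact ⟨z, Set.mem_iUnion.2 ⟨max i j, hz⟩, hxz, hyz⟩

lemma no_strict_chain {J : Set (Fin d → ℕ)} (hJ : IsIdeal J)
    {f : ℕ → Set (Fin d → ℕ)} (hid : ∀ i, IsIdeal (f i))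
    (hsub : ∀ i, f i ⊆ J)
    (hub : ∀ i k, UnboundedCoord J k → UnboundedCoord (f i) k)
    (hchain : ∀ i, f i ⊂ f (i + 1)) : False := by
  classical
  have hmono : Monotone f := monotone_nat_of_le_succ (fun i => (hchain i).1)
  -- bound function for the bounded coordinates of J
  have hBex : ∀ k : Fin d, ∃ B : ℕ, ¬ UnboundedCoord J k → ∀ x ∈ J, x k ≤ B := by
    intro k
    by_cases h : UnboundedCoord J k
    · exact ⟨0, fun h' => absurd h h'⟩
    · obtain ⟨b, hb⟩ := not_not.1 h
      exact ⟨b, fun _ => hb⟩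
  choose B hB using hBex
  have hy : ∀ i, ∃ y, y ∈ f (i + 1) ∧ y ∉ f i := by
    intro i
    obtain ⟨y, hy1, hy2⟩ := Set.exists_of_ssubset (hchain i)
    exact ⟨y, hy1, hy2⟩
  choose y hy1 hy2 using hy
  set w : ℕ → (Fin d → ℕ) := fun i k => if UnboundedCoord J k then 0 else y i k with hw
  have hwle : ∀ i, w i ≤ y i := by
    intro i k; simp only [hw]; split <;> simp
  have hwmem : ∀ i, w i ∈ f (i + 1) := fun i => (hid (i + 1)).2.1 (hwle i) (hy1 i)
  have hwnot : ∀ i, w i ∉ f i := by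
    intro i hwi
    apply hy2 i
    apply mem_of_proj (hid i)
    intro k
    by_cases h : UnboundedCoord J k
    · have := hub i k h
      rw [UnboundedCoord, not_exists] at this
      have h2 := this (y i k)
      push_neg at h2
      obtain ⟨z, hz, hz2⟩ := h2
      exact ⟨z, hz, le_of_lt hz2⟩
    · exact ⟨w i, hwi, by simp [hw, h]⟩
  have hwB : ∀ i, w i ∈ Set.Iic B := by
    intro i k
    simp only [hw]
    split
    · exact Nat.zero_le _
    · next h => exact hB k h (y i) (hsub _ (hy1 i))
  have hinj : Function.Injective w := by
    have key : ∀ i j, i < j → w i ≠ w j := by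
      intro i j hij heq
      have : w i ∈ f j := hmono hij (hwmem i)
      rw [heq] at this
      exact hwnot j this
    intro i j heq
    rcases lt_trichotomy i j with h | h | h
    · exact absurd heq (key i j h)
    · exact h
    · exact absurd heq.symm (key j i h)
  exact (Set.infinite_of_injective_forall_mem hinj hwB) (Set.finite_Iic B)

end Aux

/-- The `n`-th level of the ideals of `ℕ^d` is exactly the set of ideals whose
ω-representation has at least `n` occurrences of `ω`; in particular the
`(d+1)`-st level is empty. -/
theorem lim_nat_pow (d : ℕ) (hd : 1 ≤ d) :
    (∀ n : ℕ, Lim (Fin d → ℕ) n =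
      {I : Set (Fin d → ℕ) | IsIdeal I ∧ n ≤ {i : Fin d | UnboundedCoord I i}.ncard}) ∧
    Lim (Fin d → ℕ) (d + 1) = ∅ := by
  classical
  have main : ∀ n : ℕ, Lim (Fin d → ℕ) n =
      {I : Set (Fin d → ℕ) | IsIdeal I ∧ n ≤ {i : Fin d | UnboundedCoord I i}.ncard} := by
    intro n
    induction n with
    | zero =>
      ext I
      simp [Lim]
    | succ n ih =>
      ext J
      constructor
      · rintro ⟨f, hf, hchain, rfl⟩
        have hfI : ∀ i, IsIdeal (f i) ∧ n ≤ {k : Fin d | UnboundedCoord (f i) k}.ncard := by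
          intro i
          have := hf i; rw [ih] at this; exact this
        have hmono : Monotone f := monotone_nat_of_le_succ (fun i => (hchain i).1)
        have hJid : IsIdeal (⋃ i, f i) := iUnion_ideal (fun i => (hfI i).1) hmono
        refine ⟨hJid, ?_⟩
        by_contra hcon
        push_neg at hcon
        have hsub : ∀ i, f i ⊆ ⋃ i, f i := fun i => Set.subset_iUnion f i
        have hSsub : ∀ i, {k : Fin d | UnboundedCoord (f i) k} ⊆
            {k : Fin d | UnboundedCoord (⋃ i, f i) k} :=
          fun i k hk => unbounded_mono (hsub i) hk
        have hle : ∀ i, {k : Fin d | UnboundedCoord (⋃ i, f i) k}.ncard ≤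
            {k : Fin d | UnboundedCoord (f i) k}.ncard := by
          intro i
          calc {k : Fin d | UnboundedCoord (⋃ i, f i) k}.ncard ≤ n := by omega
          _ ≤ _ := (hfI i).2
        have hSeq : ∀ i, {k : Fin d | UnboundedCoord (f i) k} =
            {k : Fin d | UnboundedCoord (⋃ i, f i) k} :=
          fun i => Set.eq_of_subset_of_ncard_le (hSsub i) (hle i)
        refine no_strict_chain hJid (fun i => (hfI i).1) hsub ?_ hchain
        intro i k hk
        have : k ∈ {k : Fin d | UnboundedCoord (f i) k} := by
          rw [hSeq i]; exact hk
        exact this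
      · rintro ⟨hJ, hcard⟩
        have hSfin : {k : Fin d | UnboundedCoord J k}.Finite := Set.toFinite _
        have hne : {k : Fin d | UnboundedCoord J k}.Nonempty := by
          rw [← Set.ncard_pos hSfin]; omega
        obtain ⟨k, hk⟩ := hne
        refine ⟨fun i => {x ∈ J | x k ≤ i}, ?_, ?_, ?_⟩
        · intro i
          rw [ih]
          constructor
          · refine ⟨⟨0, zero_mem_ideal hJ, Nat.zero_le _⟩, ?_, ?_⟩
            · intro x y hxy ⟨hy, hyk⟩
              exact ⟨hJ.2.1 hxy hy, le_trans (hxy k) hyk⟩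
            · intro x ⟨hx, hxk⟩ y ⟨hy, hyk⟩
              exact ⟨x ⊔ y, ⟨sup_mem_ideal hJ hx hy, max_le hxk hyk⟩,
                le_sup_left, le_sup_right⟩
          · -- at least n unbounded coords
            have hsub2 : {j : Fin d | UnboundedCoord J j} \ {k} ⊆
                {j : Fin d | UnboundedCoord (fun x => x ∈ J ∧ x k ≤ i) j} := by
              rintro j ⟨hj, hjk⟩
              simp only [Set.mem_setOf_eq] at hj ⊢
              rintro ⟨b, hb⟩
              apply hj
              refine ⟨b, fun x hx => ?_⟩
              set x' : Fin d → ℕ := fun m => if m = k then 0 else x m with hx'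
              have hx'le : x' ≤ x := by
                intro m; simp only [hx']; split <;> simp
              have hx'J : x' ∈ J := hJ.2.1 hx'le hx
              have : x' j ≤ b := hb x' ⟨hx'J, by simp [hx']⟩
              have hjne : j ≠ k := by simpa using hjk
              simpa [hx', hjne] using this
            calc n ≤ ({j : Fin d | UnboundedCoord J j} \ {k}).ncard := by
                  have := Set.ncard_diff_singleton_add_one hk hSfin
                  omega
              _ ≤ _ := Set.ncard_le_ncard hsub2 (Set.toFinite _)
        · intro i
          constructor
          · rintro x ⟨hx, hxk⟩; exact ⟨hx, by omega⟩
          · intro hcon2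
            have hkub : UnboundedCoord J k := hk
            rw [UnboundedCoord, not_exists] at hkub
            have h2 := hkub i
            push_neg at h2
            obtain ⟨x, hx, hxk⟩ := h2
            set x' : Fin d → ℕ := fun m => if m = k then i + 1 else x m with hx'
            have hx'le : x' ≤ x := by
              intro m; simp only [hx']; split
              · next h => subst h; omega
              · exact le_refl _
            have hx'J : x' ∈ J := hJ.2.1 hx'le hx
            have hmem : x' ∈ {x ∈ J | x k ≤ i + 1} := ⟨hx'J, by simp [hx']⟩
            have : x' ∈ {x ∈ J | x k ≤ i} := hcon2 hmem
            simp [hx'] at this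
        · ext x
          simp only [Set.mem_iUnion, Set.mem_setOf_eq]
          exact ⟨fun hx => ⟨x k, hx, le_refl _⟩, fun ⟨i, hx, _⟩ => hx⟩
  refine ⟨main, ?_⟩
  rw [main (d + 1)]
  ext I
  simp only [Set.mem_setOf_eq, Set.mem_empty_iff_false, iff_false, not_and]
  intro hI
  have : {i : Fin d | UnboundedCoord I i}.ncard ≤ d := by
    have := Set.ncard_le_ncard (Set.subset_univ {i : Fin d | UnboundedCoord I i})
      (Set.finite_univ)
    simpa [Set.ncard_univ] using this
  omega
end

section
/- Let S = (X, →_Σ, ≤) be a WSTS. For all states x, y ∈ X and every word w ∈ Σ*, if x →_w y, then for every ideal I of X with ↓x ⊆ I there exists an ideal J of X with ↓y ⊆ J such that I ⇒_w J in the completion of S. -/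
/-- The downward closure of a set. -/
def downCl {X : Type*} [Preorder X] (D : Set X) : Set X :=
  {x : X | ∃ y ∈ D, x ≤ y}

/-- `Steps tr w x y` holds if `x →_w y`, i.e. reading the word `w` can lead
from state `x` to state `y`. -/
def Steps {X A : Type*} (tr : A → X → X → Prop) : List A → X → X → Prop
  | [], x, y => x = y
  | a :: w, x, y => ∃ z, tr a x z ∧ Steps tr w z y

/-- (Ordinary WSTS) monotonicity: a transition from a smaller state can be
simulated from a bigger state by some sequence of transitions. -/
def MonotoneTS {X A : Type*} [Preorder X] (tr : A → X → X → Prop) : Prop :=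
  ∀ (a : A) (x y x' : X), tr a x y → x ≤ x' →
    ∃ (w : List A) (y' : X), Steps tr w x' y' ∧ y ≤ y'

/-- A WSTS: the order is a wqo and the system is monotone. -/
def IsWSTS {X A : Type*} [Preorder X] (tr : A → X → X → Prop) : Prop :=
  IsWqo X ∧ MonotoneTS tr

/-- Strong monotonicity: a transition from a smaller state can be simulated by a
transition with the same label from a bigger state. -/
def StrongMonotone {X A : Type*} [Preorder X] (tr : A → X → X → Prop) : Prop :=
  ∀ (a : A) (x y x' : X), tr a x y → x ≤ x' → ∃ y', tr a x' y' ∧ y ≤ y'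

/-- The immediate `a`-successors of a set of states. -/
def post {X A : Type*} (tr : A → X → X → Prop) (a : A) (I : Set X) : Set X :=
  {y : X | ∃ x ∈ I, tr a x y}

/-- The `w`-successors of a set of states. -/
def postW {X A : Type*} (tr : A → X → X → Prop) (w : List A) (I : Set X) : Set X :=
  {y : X | ∃ x ∈ I, Steps tr w x y}

/-- One step `I ⇒_a J` of the completion: `J` is a maximal ideal included in
`↓Post_a(I)`. -/
def CompStep {X A : Type*} [Preorder X] (tr : A → X → X → Prop)
    (a : A) (I J : Set X) : Prop :=
  IsIdeal J ∧ J ⊆ downCl (post tr a I) ∧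
    ∀ K : Set X, IsIdeal K → K ⊆ downCl (post tr a I) → J ⊆ K → J = K

/-- `CompSteps tr w I J` holds if `I ⇒_w J` in the completion. -/
def CompSteps {X A : Type*} [Preorder X] (tr : A → X → X → Prop) :
    List A → Set X → Set X → Prop
  | [], I, J => I = J
  | a :: w, I, J => ∃ K, CompStep tr a I K ∧ CompSteps tr w K J

lemma exists_maximal_ideal {X A : Type*} [Preorder X]
    (tr : A → X → X → Prop) (a : A) (I : Set X) (z : X)
    (hz : z ∈ downCl (post tr a I)) :
    ∃ J : Set X, IsIdeal J ∧ downCl {z} ⊆ J ∧ CompStep tr a I J := by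
  set S : Set (Set X) := {K | IsIdeal K ∧ K ⊆ downCl (post tr a I)} with hS
  have hzS : downCl {z} ∈ S := by
    constructor
    · refine ⟨⟨z, z, rfl, le_refl z⟩, fun u v huv hv => ?_, ?_⟩
      · obtain ⟨t, ht, hvt⟩ := hv
        exact ⟨t, ht, le_trans huv hvt⟩
      · rintro u ⟨t, ht, hu⟩ v ⟨t', ht', hv⟩
        rw [Set.mem_singleton_iff] at ht ht'
        exact ⟨z, ⟨z, rfl, le_refl z⟩, le_trans hu (le_of_eq ht),
          le_trans hv (le_of_eq ht')⟩
    · rintro u ⟨t, ht, hu⟩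
      rw [Set.mem_singleton_iff] at ht
      obtain ⟨s, hs, hts⟩ := hz
      exact ⟨s, hs, le_trans (le_trans hu (le_of_eq ht)) hts⟩
  have hchains : ∀ c ⊆ S, IsChain (· ⊆ ·) c → c.Nonempty →
      ∃ ub ∈ S, ∀ s ∈ c, s ⊆ ub := by
    intro c hcS hchain hcne
    refine ⟨⋃₀ c, ⟨⟨?_, ?_, ?_⟩, ?_⟩, fun s hs => Set.subset_sUnion_of_mem hs⟩
    · obtain ⟨K, hK⟩ := hcne
      obtain ⟨u, hu⟩ := (hcS hK).1.1
      exact ⟨u, K, hK, hu⟩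
    · rintro u v huv ⟨K, hK, hv⟩
      exact ⟨K, hK, (hcS hK).1.2.1 huv hv⟩
    · rintro u ⟨K1, hK1, hu⟩ v ⟨K2, hK2, hv⟩
      rcases hchain.total hK1 hK2 with h | h
      · obtain ⟨w, hw, h1, h2⟩ := (hcS hK2).1.2.2 (h hu) hv
        exact ⟨w, ⟨K2, hK2, hw⟩, h1, h2⟩
      · obtain ⟨w, hw, h1, h2⟩ := (hcS hK1).1.2.2 hu (h hv)
        exact ⟨w, ⟨K1, hK1, hw⟩, h1, h2⟩
    · rintro u ⟨K, hK, hu⟩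
      exact (hcS hK).2 hu
  obtain ⟨m, hzm, hm⟩ := zorn_subset_nonempty S hchains _ hzS
  refine ⟨m, hm.prop.1, hzm, hm.prop.1, hm.prop.2, fun K hK hKsub hmK => ?_⟩
  exact le_antisymm hmK (hm.2 ⟨hK, hKsub⟩ hmK)

/-- If `x →_w y` in a WSTS, then from every ideal `I ⊇ ↓x` the completion can
read `w` and reach an ideal `J ⊇ ↓y`. -/
theorem compSteps_of_steps {X A : Type*} [Preorder X] [Finite A]
    (tr : A → X → X → Prop) (hS : IsWSTS tr)
    (x y : X) (w : List A) (hxy : Steps tr w x y)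
    (I : Set X) (hI : IsIdeal I) (hxI : downCl {x} ⊆ I) :
    ∃ J : Set X, IsIdeal J ∧ downCl {y} ⊆ J ∧ CompSteps tr w I J := by
  induction w generalizing x I with
  | nil =>
    cases hxy
    exact ⟨I, hI, hxI, rfl⟩
  | cons a w ih =>
    obtain ⟨z, hxz, hzy⟩ := hxy
    have hzpost : z ∈ downCl (post tr a I) :=
      ⟨z, ⟨x, hxI ⟨x, rfl, le_refl x⟩, hxz⟩, le_refl z⟩
    obtain ⟨K, hKideal, hzK, hKstep⟩ := exists_maximal_ideal tr a I z hzpost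
    obtain ⟨J, hJideal, hyJ, hJsteps⟩ := ih z hzy K hKideal hzK
    exact ⟨J, hJideal, hyJ, K, hKstep, hJsteps⟩
end

section
/- Let S = (X, →_Σ, ≤) be a WSTS. For all ideals I, J of X and every word w ∈ Σ*, if I ⇒_w J in the completion of S, then for every y ∈ J there exist x ∈ I, y' ∈ X and a word w' ∈ Σ* such that x →_{w'} y' and y' ≥ y. Moreover, if S has strong monotonicity, then w' can be taken equal to w. -/
lemma steps_append' {X A : Type*} (tr : A → X → X → Prop) :
    ∀ (w1 w2 : List A) (x z y : X), Steps tr w1 x z → Steps tr w2 z y →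
      Steps tr (w1 ++ w2) x y := by
  intro w1
  induction w1 with
  | nil => intro w2 x z y h1 h2; cases h1; exact h2
  | cons a w ih =>
    rintro w2 x z y ⟨u, hu, hsteps⟩ h2
    exact ⟨u, hu, ih w2 u z y hsteps h2⟩

lemma steps_mono {X A : Type*} [Preorder X] {tr : A → X → X → Prop}
    (hm : MonotoneTS tr) :
    ∀ (w : List A) (x y x' : X), Steps tr w x y → x ≤ x' →
      ∃ (w' : List A) (y' : X), Steps tr w' x' y' ∧ y ≤ y' := by
  intro w
  induction w with
  | nil => intro x y x' h hle; cases h; exact ⟨[], x', rfl, hle⟩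
  | cons a w ih =>
    rintro x y x' ⟨z, hz, hsteps⟩ hle
    obtain ⟨w1, z', hs1, hz'⟩ := hm a x z x' hz hle
    obtain ⟨w2, y', hs2, hy'⟩ := ih z y z' hsteps hz'
    exact ⟨w1 ++ w2, y', steps_append' tr w1 w2 x' z' y' hs1 hs2, hy'⟩

lemma steps_strong_mono {X A : Type*} [Preorder X] {tr : A → X → X → Prop}
    (hm : StrongMonotone tr) :
    ∀ (w : List A) (x y x' : X), Steps tr w x y → x ≤ x' →
      ∃ y' : X, Steps tr w x' y' ∧ y ≤ y' := by
  intro w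
  induction w with
  | nil => intro x y x' h hle; cases h; exact ⟨x', rfl, hle⟩
  | cons a w ih =>
    rintro x y x' ⟨z, hz, hsteps⟩ hle
    obtain ⟨z', hz', hlez⟩ := hm a x z x' hz hle
    obtain ⟨y', hs, hy'⟩ := ih z y z' hsteps hlez
    exact ⟨y', ⟨z', hz', hs⟩, hy'⟩

/-- If `I ⇒_w J` in the completion of a WSTS, then every element of `J` is
below some state reachable from `I` by reading some word `w'`; under strong
monotonicity `w'` can be taken to be `w` itself. -/
theorem steps_of_compSteps {X A : Type*} [Preorder X] [Finite A]
    (tr : A → X → X → Prop) (hS : IsWSTS tr)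
    (I J : Set X) (hI : IsIdeal I) (hJ : IsIdeal J)
    (w : List A) (hIJ : CompSteps tr w I J) :
    (∀ y ∈ J, ∃ x ∈ I, ∃ (y' : X) (w' : List A), Steps tr w' x y' ∧ y ≤ y') ∧
    (StrongMonotone tr →
      ∀ y ∈ J, ∃ x ∈ I, ∃ y' : X, Steps tr w x y' ∧ y ≤ y') := by
  clear hI hJ
  induction w generalizing I with
  | nil =>
    cases hIJ
    exact ⟨fun y hy => ⟨y, hy, y, [], rfl, le_refl y⟩,
      fun _ y hy => ⟨y, hy, y, rfl, le_refl y⟩⟩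
  | cons a w ih =>
    obtain ⟨K, ⟨_, hKsub, _⟩, hKJ⟩ := hIJ
    obtain ⟨ih1, ih2⟩ := ih K hKJ
    constructor
    · intro y hy
      obtain ⟨x, hxK, y', w', hsteps, hle⟩ := ih1 y hy
      obtain ⟨z, ⟨x0, hx0, htr⟩, hxz⟩ := hKsub hxK
      obtain ⟨w2, y'', hs2, hy''⟩ := steps_mono hS.2 w' x y' z hsteps hxz
      exact ⟨x0, hx0, y'', a :: w2, ⟨z, htr, hs2⟩, le_trans hle hy''⟩
    · intro hsm y hy
      obtain ⟨x, hxK, y', hsteps, hle⟩ := ih2 hsm y hy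
      obtain ⟨z, ⟨x0, hx0, htr⟩, hxz⟩ := hKsub hxK
      obtain ⟨y'', hs2, hy''⟩ := steps_strong_mono hsm w x y' z hsteps hxz
      exact ⟨x0, hx0, y'', ⟨z, htr, hs2⟩, le_trans hle hy''⟩
end

section
/- Let S = (X, →_Σ, ≤) be a WSTS with strong monotonicity and let x ∈ X. Then the set of finite traces of S from x equals the set of finite traces of the completion of S from the ideal ↓x, and every infinite trace of S from x is an infinite trace of the completion of S from ↓x. -/
/-- The finite traces of a transition system from a state. -/
def traces {X A : Type*} (tr : A → X → X → Prop) (x : X) : Set (List A) :=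
  {w : List A | ∃ y : X, Steps tr w x y}

/-- The finite traces of the completion from an ideal. -/
def compTraces {X A : Type*} [Preorder X] (tr : A → X → X → Prop) (I : Set X) :
    Set (List A) :=
  {w : List A | ∃ J : Set X, CompSteps tr w I J}

/-- `w : ℕ → A` is an infinite trace from `x`. -/
def InfTrace {X A : Type*} (tr : A → X → X → Prop) (x : X) (w : ℕ → A) : Prop :=
  ∃ ρ : ℕ → X, ρ 0 = x ∧ ∀ i, tr (w i) (ρ i) (ρ (i + 1))

/-- `w : ℕ → A` is an infinite trace of the completion from the ideal `I`. -/
def CompInfTrace {X A : Type*} [Preorder X] (tr : A → X → X → Prop)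
    (I : Set X) (w : ℕ → A) : Prop :=
  ∃ ρ : ℕ → Set X, ρ 0 = I ∧ ∀ i, CompStep tr (w i) (ρ i) (ρ (i + 1))

section Aux

variable {X A : Type*} [Preorder X] (tr : A → X → X → Prop)

/-- Strong monotonicity lifts to words. -/
lemma steps_strongMono (hsm : StrongMonotone tr) :
    ∀ (w : List A) (x y x' : X), Steps tr w x y → x ≤ x' →
      ∃ y', Steps tr w x' y' ∧ y ≤ y' := by
  intro w
  induction w with
  | nil => intro x y x' h hle; cases h; exact ⟨x', rfl, hle⟩
  | cons a w ih =>
    rintro x y x' ⟨z, hz, hsteps⟩ hle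
    obtain ⟨z', hz', hzle⟩ := hsm a x z x' hz hle
    obtain ⟨y', hy', hyle⟩ := ih z y z' hsteps hzle
    exact ⟨y', ⟨z', hz', hy'⟩, hyle⟩

lemma isIdeal_downCl_singleton (x : X) : IsIdeal (downCl ({x} : Set X)) := by
  refine ⟨⟨x, x, rfl, le_refl x⟩, ?_, ?_⟩
  · rintro a b hab ⟨c, hc, hbc⟩; exact ⟨c, hc, le_trans hab hbc⟩
  · rintro a ⟨c, hc, hac⟩ b ⟨d, hd, hbd⟩
    exact ⟨x, ⟨x, rfl, le_refl x⟩, hac.trans (le_of_eq hc), hbd.trans (le_of_eq hd)⟩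

/-- Any ideal contained in a set `D` extends to a maximal such ideal. -/
lemma exists_maximal_ideal_s7 {J0 D : Set X} (hJ0 : IsIdeal J0) (hsub : J0 ⊆ D) :
    ∃ J : Set X, IsIdeal J ∧ J ⊆ D ∧ J0 ⊆ J ∧
      ∀ K : Set X, IsIdeal K → K ⊆ D → J ⊆ K → J = K := by
  have H : ∀ c ⊆ {K : Set X | IsIdeal K ∧ K ⊆ D}, IsChain (· ⊆ ·) c → c.Nonempty →
      ∃ ub ∈ {K : Set X | IsIdeal K ∧ K ⊆ D}, ∀ s ∈ c, s ⊆ ub := by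
    rintro c hcS hchain ⟨c0, hc0⟩
    refine ⟨⋃₀ c, ⟨⟨?_, ?_, ?_⟩, ?_⟩, fun s hs => Set.subset_sUnion_of_mem hs⟩
    · obtain ⟨z, hz⟩ := (hcS hc0).1.1
      exact ⟨z, c0, hc0, hz⟩
    · rintro a b hab ⟨s, hs, hbs⟩
      exact ⟨s, hs, (hcS hs).1.2.1 hab hbs⟩
    · rintro a ⟨s, hs, has⟩ b ⟨t, ht, hbt⟩
      rcases hchain.total hs ht with hst | hts
      · obtain ⟨z, hz, h1, h2⟩ := (hcS ht).1.2.2 (hst has) hbt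
        exact ⟨z, ⟨t, ht, hz⟩, h1, h2⟩
      · obtain ⟨z, hz, h1, h2⟩ := (hcS hs).1.2.2 has (hts hbt)
        exact ⟨z, ⟨s, hs, hz⟩, h1, h2⟩
    · rintro a ⟨s, hs, has⟩
      exact (hcS hs).2 has
  obtain ⟨m, hm0, hmS⟩ := zorn_subset_nonempty
    {K : Set X | IsIdeal K ∧ K ⊆ D} H J0 ⟨hJ0, hsub⟩
  exact ⟨m, hmS.prop.1, hmS.prop.2, hm0,
    fun K hK hKD hmK => hmS.eq_of_le ⟨hK, hKD⟩ hmK⟩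

/-- An actual transition from inside an ideal is matched by a completion step. -/
lemma exists_compStep {I : Set X} (hI : IsIdeal I) {z0 z : X} {a : A}
    (hz0 : z0 ∈ I) (htr : tr a z0 z) :
    ∃ J, CompStep tr a I J ∧ z ∈ J := by
  have hz : z ∈ post tr a I := ⟨z0, hz0, htr⟩
  have hsub : downCl ({z} : Set X) ⊆ downCl (post tr a I) := by
    rintro b ⟨c, hc, hbc⟩; exact ⟨z, hz, hbc.trans (le_of_eq hc)⟩
  obtain ⟨J, hJ, hJD, hJ0, hmax⟩ :=
    exists_maximal_ideal_s7 (isIdeal_downCl_singleton z) hsub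
  exact ⟨J, ⟨hJ, hJD, hmax⟩, hJ0 ⟨z, rfl, le_refl z⟩⟩

/-- Completion runs starting from an ideal end in a nonempty set. -/
lemma compSteps_nonempty :
    ∀ (w : List A) (I J : Set X), IsIdeal I → CompSteps tr w I J → J.Nonempty := by
  intro w
  induction w with
  | nil => rintro I J hI rfl; exact hI.1
  | cons a w ih =>
    rintro I J hI ⟨K, hK, hKJ⟩
    exact ih K J hK.1 hKJ

/-- Soundness: completion runs are covered by real runs. -/
lemma compSteps_sound (hsm : StrongMonotone tr) :
    ∀ (w : List A) (I J : Set X), CompSteps tr w I J → ∀ z ∈ J,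
      ∃ x' ∈ I, ∃ y, Steps tr w x' y ∧ z ≤ y := by
  intro w
  induction w with
  | nil => rintro I J rfl z hz; exact ⟨z, hz, z, rfl, le_refl z⟩
  | cons a w ih =>
    rintro I J ⟨K, ⟨hKid, hKsub, _⟩, hKJ⟩ z hz
    obtain ⟨k, hk, y, hsteps, hzy⟩ := ih K J hKJ z hz
    obtain ⟨p, ⟨x', hx', htr⟩, hkp⟩ := hKsub hk
    obtain ⟨y', hsteps', hyy'⟩ := steps_strongMono tr hsm w k y p hsteps hkp
    exact ⟨x', hx', y', ⟨p, htr, hsteps'⟩, le_trans hzy hyy'⟩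

/-- Completeness: real runs are simulated by completion runs. -/
lemma steps_complete :
    ∀ (w : List A) (x y : X) (I : Set X), IsIdeal I → x ∈ I → Steps tr w x y →
      ∃ J, CompSteps tr w I J ∧ y ∈ J := by
  intro w
  induction w with
  | nil => rintro x y I hI hx rfl; exact ⟨I, rfl, hx⟩
  | cons a w ih =>
    rintro x y I hI hx ⟨z, htr, hsteps⟩
    obtain ⟨K, hK, hzK⟩ := exists_compStep tr hI hx htr
    obtain ⟨J, hJ, hyJ⟩ := ih z y K hK.1 hzK hsteps
    exact ⟨J, ⟨K, hK, hJ⟩, hyJ⟩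

end Aux

/-- In a WSTS with strong monotonicity, the finite traces from `x` coincide with
the finite traces of the completion from `↓x`, and every infinite trace from `x`
is an infinite trace of the completion from `↓x`. -/
theorem traces_eq_compTraces {X A : Type*} [Preorder X] [Finite A]
    (tr : A → X → X → Prop) (hS : IsWSTS tr) (hsm : StrongMonotone tr) (x : X) :
    traces tr x = compTraces tr (downCl {x}) ∧
    ∀ w : ℕ → A, InfTrace tr x w → CompInfTrace tr (downCl {x}) w := by
  classical
  have hxid : IsIdeal (downCl ({x} : Set X)) := isIdeal_downCl_singleton x
  have hxmem : x ∈ downCl ({x} : Set X) := ⟨x, rfl, le_refl x⟩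
  constructor
  · ext w
    constructor
    · rintro ⟨y, hy⟩
      obtain ⟨J, hJ, _⟩ := steps_complete tr w x y _ hxid hxmem hy
      exact ⟨J, hJ⟩
    · rintro ⟨J, hJ⟩
      obtain ⟨z, hz⟩ := compSteps_nonempty tr w _ J hxid hJ
      obtain ⟨x', ⟨x'', hx'', hx'⟩, y, hsteps, _⟩ :=
        compSteps_sound tr hsm w _ J hJ z hz
      obtain ⟨y', hy', _⟩ :=
        steps_strongMono tr hsm w x' y x hsteps (hx'.trans (le_of_eq hx''))
      exact ⟨y', hy'⟩
  · rintro w ⟨ρ, hρ0, hρ⟩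
    let σ : ℕ → Set X := fun n => Nat.rec (downCl ({x} : Set X))
      (fun i Ii =>
        if h : ∃ J, CompStep tr (w i) Ii J ∧ ρ (i + 1) ∈ J then h.choose else ∅) n
    have key : ∀ i, ρ i ∈ σ i ∧ IsIdeal (σ i) ∧
        (∀ j, i = j + 1 → CompStep tr (w j) (σ j) (σ i)) := by
      intro i
      induction i with
      | zero =>
        exact ⟨⟨x, rfl, hρ0.le⟩, hxid, fun j hj => by omega⟩
      | succ i ih =>
        have hex : ∃ J, CompStep tr (w i) (σ i) J ∧ ρ (i + 1) ∈ J :=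
          exists_compStep tr ih.2.1 ih.1 (hρ i)
        have hσ : σ (i + 1) = hex.choose := by
          show dite _ _ _ = _
          rw [dif_pos hex]
        obtain ⟨hstep, hmem⟩ := hex.choose_spec
        rw [hσ]
        refine ⟨hmem, hstep.1, fun j hj => ?_⟩
        have : j = i := by omega
        subst this
        exact hstep
    exact ⟨σ, rfl, fun i => ((key (i + 1)).2.2 i rfl)⟩
end

section
/- Let S = (X, →_Σ, ≤) be a WSTS with strong monotonicity whose completion is deterministic and has strong-strict monotonicity. Let I be an ideal of X, n ∈ ℕ, and w ∈ Σ⁺ a nonempty word. If I ∈ Lim^n(X) and w(I) is defined (i.e., I has a w-successor in the completion), then w(I) ∈ Lim^n(X). -/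
/-- The completion is deterministic: each ideal has at most one `a`-successor. -/
def CompDeterministic {X A : Type*} [Preorder X] (tr : A → X → X → Prop) : Prop :=
  ∀ (a : A) (I J J' : Set X), CompStep tr a I J → CompStep tr a I J' → J = J'

/-- Strong-strict monotonicity of the completion: `I ⇒_a J` and `I' ⊇ I` imply
`I' ⇒_a J'` for some `J' ⊇ J`, which can moreover be chosen with `J' ⊋ J`
whenever `I' ⊋ I`. -/
def CompStrongStrictMono {X A : Type*} [Preorder X] (tr : A → X → X → Prop) : Prop :=
  ∀ (a : A) (I I' J : Set X), CompStep tr a I J → IsIdeal I' → I ⊆ I' →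
    ∃ J' : Set X, CompStep tr a I' J' ∧ J ⊆ J' ∧ (I ⊂ I' → J ⊂ J')

section Aux

variable {X A : Type*} [Preorder X]

lemma isIdeal_principal (z : X) : IsIdeal {u : X | u ≤ z} :=
  ⟨⟨z, le_refl z⟩, fun _ _ h h' => le_trans h h',
    fun x hx _ hy => ⟨z, le_refl z, hx, hy⟩⟩

lemma downwardsClosed_downCl (D : Set X) : DownwardsClosed (downCl D) :=
  fun _ _ h ⟨y, hy, hle⟩ => ⟨y, hy, le_trans h hle⟩

lemma isIdeal_sUnion_chain (c : Set (Set X)) (hc : IsChain (· ⊆ ·) c)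
    (hne : c.Nonempty) (hid : ∀ K ∈ c, IsIdeal K) : IsIdeal (⋃₀ c) := by
  obtain ⟨K₀, hK₀⟩ := hne
  refine ⟨?_, ?_, ?_⟩
  · obtain ⟨x, hx⟩ := (hid K₀ hK₀).1
    exact ⟨x, K₀, hK₀, hx⟩
  · rintro x y hxy ⟨K, hK, hyK⟩
    exact ⟨K, hK, (hid K hK).2.1 hxy hyK⟩
  · rintro x ⟨K1, hK1, hxK⟩ y ⟨K2, hK2, hyK⟩
    rcases eq_or_ne K1 K2 with rfl | hne'
    · obtain ⟨z, hz, h1, h2⟩ := (hid K1 hK1).2.2 hxK hyK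
      exact ⟨z, ⟨K1, hK1, hz⟩, h1, h2⟩
    · rcases hc hK1 hK2 hne' with h | h
      · obtain ⟨z, hz, h1, h2⟩ := (hid K2 hK2).2.2 (h hxK) hyK
        exact ⟨z, ⟨K2, hK2, hz⟩, h1, h2⟩
      · obtain ⟨z, hz, h1, h2⟩ := (hid K1 hK1).2.2 hxK (h hyK)
        exact ⟨z, ⟨K1, hK1, hz⟩, h1, h2⟩

lemma isIdeal_iUnion_mono (f : ℕ → Set X) (hmono : Monotone f)
    (hid : ∀ i, IsIdeal (f i)) : IsIdeal (⋃ i, f i) := by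
  have : (⋃ i, f i) = ⋃₀ (Set.range f) := by simp [Set.sUnion_range]
  rw [this]
  refine isIdeal_sUnion_chain _ ?_ ⟨f 0, 0, rfl⟩ ?_
  · rintro _ ⟨i, rfl⟩ _ ⟨j, rfl⟩ _
    rcases le_total i j with h | h
    · exact Or.inl (hmono h)
    · exact Or.inr (hmono h)
  · rintro _ ⟨i, rfl⟩; exact hid i

lemma lim_isIdeal : ∀ (n : ℕ) (I : Set X), I ∈ Lim X n → IsIdeal I := by
  intro n
  induction n with
  | zero => intro I hI; exact hI
  | succ n ih =>
    rintro I ⟨f, hf, hchain, rfl⟩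
    exact isIdeal_iUnion_mono f
      (monotone_nat_of_le_succ fun i => (hchain i).subset)
      (fun i => ih _ (hf i))

lemma exists_compStep_s9 (tr : A → X → X → Prop) (a : A) (I K₀ : Set X)
    (hK₀ : IsIdeal K₀) (hsub : K₀ ⊆ downCl (post tr a I)) :
    ∃ J, CompStep tr a I J ∧ K₀ ⊆ J := by
  have hz := zorn_subset_nonempty
    {K : Set X | IsIdeal K ∧ K ⊆ downCl (post tr a I)}
    (fun c hc hchain hne =>
      ⟨⋃₀ c, ⟨isIdeal_sUnion_chain c hchain hne (fun K hK => (hc hK).1),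
        Set.sUnion_subset fun K hK => (hc hK).2⟩,
        fun s hs => Set.subset_sUnion_of_mem hs⟩)
    K₀ ⟨hK₀, hsub⟩
  obtain ⟨m, hKm, hm⟩ := hz
  refine ⟨m, ⟨hm.prop.1, hm.prop.2, fun K hK hKsub hmK => ?_⟩, hKm⟩
  exact Set.Subset.antisymm hmK (hm.2 ⟨hK, hKsub⟩ hmK)

lemma compStep_preserves_level (tr : A → X → X → Prop)
    (hdet : CompDeterministic tr) (hssm : CompStrongStrictMono tr) :
    ∀ (n : ℕ) (I J : Set X) (a : A), I ∈ Lim X n → CompStep tr a I J →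
      J ∈ Lim X n := by
  intro n
  induction n with
  | zero => intro I J a _ hJ; exact hJ.1
  | succ n ih =>
    rintro I J a ⟨f, hf, hchain, rfl⟩ hJ
    set I : Set X := ⋃ i, f i with hIdef
    have hfmono : Monotone f := monotone_nat_of_le_succ fun i => (hchain i).subset
    have hIideal : IsIdeal I :=
      isIdeal_iUnion_mono f hfmono (fun i => lim_isIdeal n _ (hf i))
    -- J is nonempty, get a witness y ∈ post tr a I
    obtain ⟨z0, hz0⟩ := hJ.1.1
    obtain ⟨y0, ⟨x0, hx0I, hx0y0⟩, _⟩ := hJ.2.1 hz0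
    obtain ⟨j, hx0j⟩ := Set.mem_iUnion.1 hx0I
    -- shifted sequence
    set g : ℕ → Set X := fun i => f (j + i) with hgdef
    have hgLim : ∀ i, g i ∈ Lim X n := fun i => hf (j + i)
    have hgchain : ∀ i, g i ⊂ g (i + 1) := fun i => by
      show f (j + i) ⊂ f (j + (i + 1))
      rw [Nat.add_succ]
      exact hchain (j + i)
    have hgsubI : ∀ i, g i ⊆ I := fun i => Set.subset_iUnion f (j + i)
    have hgideal : ∀ i, IsIdeal (g i) := fun i => lim_isIdeal n _ (hgLim i)
    have hx0g : ∀ i, x0 ∈ g i := fun i => hfmono (Nat.le_add_right j i) hx0j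
    -- each g i has an a-successor
    have hexists : ∀ i, ∃ Ji, CompStep tr a (g i) Ji := by
      intro i
      obtain ⟨Ji, hJi, _⟩ := exists_compStep_s9 tr a (g i) {u : X | u ≤ y0}
        (isIdeal_principal y0)
        (fun u hu => ⟨y0, ⟨x0, hx0g i, hx0y0⟩, hu⟩)
      exact ⟨Ji, hJi⟩
    choose Js hJs using hexists
    -- strictly increasing
    have hJschain : ∀ i, Js i ⊂ Js (i + 1) := by
      intro i
      obtain ⟨J', hJ', hsub', hstrict⟩ :=
        hssm a (g i) (g (i + 1)) (Js i) (hJs i) (hgideal (i + 1)) (hgchain i).subset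
      have : J' = Js (i + 1) := hdet a (g (i + 1)) J' (Js (i + 1)) hJ' (hJs (i + 1))
      exact this ▸ hstrict (hgchain i)
    -- each Js i ⊆ J
    have hJssubJ : ∀ i, Js i ⊆ J := by
      intro i
      obtain ⟨J', hJ', hsub', _⟩ := hssm a (g i) I (Js i) (hJs i) hIideal (hgsubI i)
      have : J' = J := hdet a I J' J hJ' hJ
      exact this ▸ hsub'
    -- J ⊆ ⋃ Js
    have hJsub : J ⊆ ⋃ i, Js i := by
      intro z hz
      obtain ⟨y, ⟨x, hxI, hxy⟩, hzy⟩ := hJ.2.1 hz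
      obtain ⟨k, hxk⟩ := Set.mem_iUnion.1 hxI
      have hxgk : x ∈ g k := hfmono (Nat.le_add_left k j) hxk
      obtain ⟨K, hK, hzK⟩ := exists_compStep_s9 tr a (g k) {u : X | u ≤ z}
        (isIdeal_principal z) (fun u hu => ⟨y, ⟨x, hxgk, hxy⟩, le_trans hu hzy⟩)
      have : K = Js k := hdet a (g k) K (Js k) hK (hJs k)
      exact Set.mem_iUnion.2 ⟨k, this ▸ hzK (le_refl z)⟩
    have hJeq : J = ⋃ i, Js i :=
      Set.Subset.antisymm hJsub (Set.iUnion_subset hJssubJ)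
    exact ⟨Js, fun i => ih (g i) (Js i) a (hgLim i) (hJs i), hJschain, hJeq⟩

end Aux

/-- In a WSTS with strong monotonicity whose completion is deterministic with
strong-strict monotonicity, taking the `w`-successor in the completion preserves
the level: if `I ∈ Lim^n(X)` and `I ⇒_w J`, then `J ∈ Lim^n(X)`. -/
theorem compSteps_preserves_level {X A : Type*} [Preorder X] [Finite A]
    (tr : A → X → X → Prop) (hS : IsWSTS tr) (hsm : StrongMonotone tr)
    (hdet : CompDeterministic tr) (hssm : CompStrongStrictMono tr)
    (I : Set X) (hI : IsIdeal I) (n : ℕ) (hIn : I ∈ Lim X n)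
    (w : List A) (hw : w ≠ [])
    (J : Set X) (hJ : CompSteps tr w I J) :
    J ∈ Lim X n := by
  clear hw
  induction w generalizing I with
  | nil => cases hJ; exact hIn
  | cons a w ihw =>
    obtain ⟨K, hK, hKJ⟩ := hJ
    have hKn : K ∈ Lim X n := compStep_preserves_level tr hdet hssm n I K a hIn hK
    exact ihw K (lim_isIdeal n K hKn) hKn hKJ
end

section
/- Let X be a countable set equipped with a well-quasi-ordering ≤. Then the set of downwards-closed subsets of X is countable; in particular, the set Idl(X) of ideals of X is countable. -/
/-- In a countable wqo, there are only countably many downwards-closed subsets;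
in particular there are only countably many ideals. -/
theorem countable_downwardsClosed_and_ideals {X : Type*} [Preorder X] [Countable X]
    (hX : IsWqo X) :
    {D : Set X | DownwardsClosed D}.Countable ∧
    {I : Set X | IsIdeal I}.Countable := by
  classical
  -- every downward-closed set has the form `f F` for a finite F
  set f : Finset X → Set X := fun F => {x | ∀ y ∈ F, ¬ y ≤ x} with hf
  have key : ∀ D : Set X, DownwardsClosed D → ∃ F : Finset X, D = f F := by
    intro D hD
    by_contra hcon
    push_neg at hcon
    have H : ∀ F : Finset X, (↑F : Set X) ⊆ Dᶜ → ∃ x, x ∉ D ∧ ∀ y ∈ F, ¬ y ≤ x := by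
      intro F hF
      have hsub : D ⊆ f F := by
        intro x hx y hyF hyx
        exact hF hyF (hD hyx hx)
      rcases Set.exists_of_ssubset (hsub.ssubset_of_ne (hcon F)) with ⟨x, hx1, hx2⟩
      exact ⟨x, hx2, hx1⟩
    choose w hw1 hw2 using H
    -- build an infinite bad sequence
    let G : ℕ → {F : Finset X // (↑F : Set X) ⊆ Dᶜ} := fun n =>
      Nat.rec ⟨∅, by simp⟩
        (fun _ p => ⟨insert (w p.1 p.2) p.1, by
          intro x hx
          rcases Finset.mem_insert.mp (by exact_mod_cast hx) with h | h
          · rw [h]; exact hw1 p.1 p.2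
          · exact p.2 h⟩) n
    let g : ℕ → X := fun n => w (G n).1 (G n).2
    have hmem : ∀ n, g n ∈ (G (n + 1)).1 := fun n => Finset.mem_insert_self _ _
    have hmono : ∀ m n, m ≤ n → (G m).1 ⊆ (G n).1 := by
      intro m n hmn
      induction hmn with
      | refl => exact subset_rfl
      | step _ ih => exact ih.trans (Finset.subset_insert _ _)
    obtain ⟨i, j, hij, hle⟩ := hX g
    exact hw2 (G j).1 (G j).2 (g i) (hmono (i + 1) j hij (hmem i)) hle
  have hsub : {D : Set X | DownwardsClosed D} ⊆ Set.range f := by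
    intro D hD
    rcases key D hD with ⟨F, hF⟩
    exact ⟨F, hF.symm⟩
  have hD : {D : Set X | DownwardsClosed D}.Countable :=
    (Set.countable_range f).mono hsub
  refine ⟨hD, hD.mono ?_⟩
  intro I hI
  exact hI.2.1
end

section
/- Let d ≥ 1 and order ℕ^d componentwise. Then the set Idl(ℕ^d) of ideals of ℕ^d, partially ordered by inclusion (strict inclusion is well-founded since Idl(ℕ^d) is well-quasi-ordered by inclusion), has ordinal rank rk(Idl(ℕ^d)) = ω·d + 1. -/
/-- The set of ideals of `X`, partially ordered by inclusion. -/
def Idl (X : Type*) [Preorder X] : Type _ := {I : Set X // IsIdeal I}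

noncomputable instance (X : Type*) [Preorder X] : PartialOrder (Idl X) :=
  Subtype.partialOrder _

/-- The ordinal rank of an element of a preorder: `rk z = sup {rk y + 1 : y < z}`
when the strict order is well-founded (and `0` otherwise, by convention). -/
noncomputable def rk {Z : Type*} [Preorder Z] (z : Z) : Ordinal :=
  @dite _ (WellFounded ((· < ·) : Z → Z → Prop)) (Classical.dec _)
    (fun h => (h.apply z).rank) (fun _ => 0)

/-!
An ideal of `ℕ^ι` is determined by its coordinatewise supremum `v ∈ ℕ∞^ι`: it is the set of
`x` with `x ≤ v`. This identifies `Idl(ℕ^ι)` with `ℕ∞^ι`, so the claim is that `⊤ : ℕ∞^ι` has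
rank `ω·|ι|`. The rank is at most that because `v ↦ ω·#{i | v i = ⊤} + ∑_{v i < ⊤} v i` is
strictly monotone; it is at least that because raising a coordinate from `0` to `⊤` passes the
infinite chain `0 < 1 < 2 < ⋯` and so adds `ω` to the rank.
-/

open Ordinal IsWellFounded Function

universe u

section Rank

variable {α β : Type u} [Preorder α] [Preorder β]

theorem rk_eq_rank [WellFoundedLT α] (a : α) : rk a = rank (· < ·) a := by
  rw [rk, dif_pos wellFounded_lt]
  rfl

theorem rank_le_of_strictMono [WellFoundedLT α] {g : α → Ordinal.{u}} (hg : StrictMono g)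
    (a : α) : rank (· < ·) a ≤ g a := by
  induction a using WellFoundedLT.induction with
  | _ a ih =>
    rw [rank_eq]
    exact Ordinal.iSup_le fun b => Order.succ_le_of_lt <| (ih b b.2).trans_lt (hg b.2)

theorem OrderIso.rank_apply [WellFoundedLT α] [WellFoundedLT β] (e : α ≃o β) (a : α) :
    rank (· < ·) (e a) = rank (· < ·) a := by
  refine le_antisymm ?_ ?_
  · simpa using rank_le_of_strictMono (WellFoundedLT.rank_strictMono.comp e.symm.strictMono) (e a)
  · exact rank_le_of_strictMono (WellFoundedLT.rank_strictMono.comp e.strictMono) a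

theorem iSup_succ_rank_eq_succ_rank_top {γ : Type u} [PartialOrder γ] [WellFoundedLT γ]
    [OrderTop γ] : ⨆ c : γ, Order.succ (rank (· < ·) c) = Order.succ (rank (· < ·) (⊤ : γ)) :=
  le_antisymm
    (Ordinal.iSup_le fun _ => Order.succ_le_succ (WellFoundedLT.rank_strictMono.monotone le_top))
    (Ordinal.le_iSup (fun c : γ => Order.succ (rank (· < ·) c)) ⊤)

theorem rank_add_omega0_le_of_strictMono [WellFoundedLT α] {f : ℕ → α} (hf : StrictMono f)
    {b : α} (hb : ∀ n, f n < b) : rank (· < ·) (f 0) + ω ≤ rank (· < ·) b := by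
  have hchain : ∀ n : ℕ, rank (· < ·) (f 0) + n ≤ rank (· < ·) (f n) := by
    intro n
    induction n with
    | zero => simp
    | succ n ih =>
      rw [Nat.cast_add_one, ← add_assoc, Order.add_one_le_iff]
      exact ih.trans_lt (WellFoundedLT.rank_strictMono (hf n.lt_succ_self))
  rw [add_le_iff_of_isSuccLimit isSuccLimit_omega0]
  intro c hc
  obtain ⟨n, rfl⟩ := lt_omega0.1 hc
  exact (hchain n).trans (WellFoundedLT.rank_strictMono (hb n)).le

end Rank

theorem ENat.exists_natCast_le_of_le_iSup {κ : Sort*} [Nonempty κ] {f : κ → ℕ} {n : ℕ}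
    (h : (n : ℕ∞) ≤ ⨆ k, (f k : ℕ∞)) : ∃ k, n ≤ f k := by
  by_contra! hlt
  obtain ⟨k⟩ := ‹Nonempty κ›
  have hle : ⨆ k, (f k : ℕ∞) ≤ ((n - 1 : ℕ) : ℕ∞) :=
    iSup_le fun k => by exact_mod_cast Nat.le_sub_one_of_lt (hlt k)
  have hk := hlt k
  have hn : n ≤ n - 1 := by exact_mod_cast h.trans hle
  omega

theorem IsIdeal.exists_forall_le {X : Type*} [Preorder X] {I : Set X} (hI : IsIdeal I)
    {κ : Type*} [Finite κ] {f : κ → X} (hf : ∀ k, f k ∈ I) : ∃ z ∈ I, ∀ k, f k ≤ z := by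
  have : Nonempty I := hI.1.to_subtype
  have : IsDirectedOrder I := ⟨fun a b => by
    obtain ⟨z, hz, haz, hbz⟩ := hI.2.2 a.2 b.2
    exact ⟨⟨z, hz⟩, haz, hbz⟩⟩
  obtain ⟨z, hz⟩ := Finite.exists_le fun k => (⟨f k, hf k⟩ : I)
  exact ⟨z, z.2, hz⟩

def natIic {ι : Type*} (v : ι → ℕ∞) : Set (ι → ℕ) := {x | ∀ i, (x i : ℕ∞) ≤ v i}

theorem isIdeal_natIic {ι : Type*} (v : ι → ℕ∞) : IsIdeal (natIic v) := by
  refine ⟨⟨0, fun i => by simp⟩, fun x y hxy hy i => le_trans (by exact_mod_cast hxy i) (hy i),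
    fun x hx y hy => ⟨x ⊔ y, fun i => ?_, le_sup_left, le_sup_right⟩⟩
  change ((max (x i) (y i) : ℕ) : ℕ∞) ≤ v i
  rw [Nat.mono_cast.map_max]
  exact max_le (hx i) (hy i)

namespace Idl

variable {ι : Type u}

noncomputable def supVec (I : Idl (ι → ℕ)) (i : ι) : ℕ∞ := ⨆ x : I.1, ((x : ι → ℕ) i : ℕ∞)

theorem natIic_supVec [Finite ι] (I : Idl (ι → ℕ)) : natIic (supVec I) = I.1 := by
  refine Set.Subset.antisymm (fun x hx => ?_) fun x hx i =>
    le_iSup (fun y : I.1 => ((y : ι → ℕ) i : ℕ∞)) ⟨x, hx⟩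
  have : Nonempty I.1 := I.2.1.to_subtype
  choose y hy using fun i => ENat.exists_natCast_le_of_le_iSup (hx i)
  obtain ⟨z, hz, hyz⟩ := I.2.exists_forall_le fun i => (y i).2
  exact I.2.2.1 (fun i => (hy i).trans (hyz i i)) hz

theorem supVec_natIic (v : ι → ℕ∞) : supVec ⟨natIic v, isIdeal_natIic v⟩ = v := by
  classical
  funext i
  refine le_antisymm (iSup_le fun x => x.2 i) (ENat.forall_natCast_le_iff_le.1 fun n hn => ?_)
  have hmem : Pi.single i n ∈ natIic v := fun j => by
    rcases eq_or_ne j i with rfl | hj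
    · simpa using hn
    · simp [hj]
  calc (n : ℕ∞) = ((Pi.single i n : ι → ℕ) i : ℕ∞) := by simp
    _ ≤ _ := le_iSup (fun y : natIic v => ((y : ι → ℕ) i : ℕ∞)) ⟨_, hmem⟩

noncomputable def orderIsoENat [Finite ι] : Idl (ι → ℕ) ≃o (ι → ℕ∞) :=
  Equiv.toOrderIso
    { toFun := supVec
      invFun := fun v => ⟨natIic v, isIdeal_natIic v⟩
      left_inv := fun I => Subtype.ext (natIic_supVec I)
      right_inv := supVec_natIic }
    (fun _ J h i => iSup_le fun x => le_iSup (fun y : J.1 => ((y : ι → ℕ) i : ℕ∞)) ⟨x, h x.2⟩)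
    (fun _ _ h _ hx i => (hx i).trans (h i))

instance [Finite ι] : WellFoundedLT (Idl (ι → ℕ)) := orderIsoENat.strictMono.wellFoundedLT

end Idl

section ENatPi

variable {ι : Type u} [Fintype ι]

theorem omega0_mul_add_lt_omega0_mul {a b : ℕ} (m : ℕ) (h : a < b) :
    ω * a + m < ω * b :=
  calc ω * a + m < ω * a + ω := add_lt_add_right (natCast_lt_omega0 m) _
    _ = ω * (a + 1 : ℕ) := by rw [Nat.cast_add_one, mul_add_one]
    _ ≤ ω * b := mul_le_mul_right (by exact_mod_cast h) _

noncomputable def ordVal (v : ι → ℕ∞) : Ordinal.{u} :=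
  ω * (Finset.univ.filter fun i => v i = ⊤).card + ∑ i, (v i).toNat

theorem ordVal_strictMono : StrictMono (ordVal (ι := ι)) := by
  intro v w hvw
  set S := Finset.univ.filter fun i => v i = ⊤
  set T := Finset.univ.filter fun i => w i = ⊤
  have hST : S ⊆ T := fun i hi => by
    simp only [S, T, Finset.mem_filter, Finset.mem_univ, true_and] at hi ⊢
    exact top_le_iff.1 (hi ▸ hvw.le i)
  rcases (Finset.card_le_card hST).lt_or_eq with hlt | heq
  · calc ordVal v < ω * T.card := omega0_mul_add_lt_omega0_mul _ hlt
      _ ≤ ordVal w := le_add_right le_rfl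
  have htop : ∀ i, w i = ⊤ → v i = ⊤ := fun i hi => by
    have : i ∈ S := (Finset.eq_of_subset_of_card_le hST heq.ge).symm ▸ (by simpa [T] using hi)
    simpa [S] using this
  obtain ⟨i₀, hi₀⟩ := (Pi.lt_def.1 hvw).2
  have hw₀ : w i₀ ≠ ⊤ := fun h => hi₀.ne (by rw [h, htop i₀ h])
  have hsum : ∑ i, (v i).toNat < ∑ i, (w i).toNat := by
    refine Finset.sum_lt_sum (fun i _ => ?_) ⟨i₀, Finset.mem_univ _, ?_⟩
    · by_cases hw : w i = ⊤
      · simp [hw, htop i hw]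
      · exact ENat.toNat_le_toNat (hvw.le i) hw
    · have hv₀ : v i₀ ≠ ⊤ := hi₀.ne_top
      rw [← ENat.natCast_toNat hv₀, ← ENat.natCast_toNat hw₀] at hi₀
      exact_mod_cast hi₀
  change ω * S.card + _ < ω * T.card + _
  rw [heq]
  exact add_lt_add_right (by exact_mod_cast hsum) _

theorem rank_add_omega0_le_rank_update_top [DecidableEq ι] {v : ι → ℕ∞} {i : ι} (hv : v i = 0) :
    rank (· < ·) v + ω ≤ rank (· < ·) (update v i ⊤) := by
  have hchain : StrictMono fun n : ℕ => update v i (n : ℕ∞) :=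
    update_strictMono.comp Nat.strictMono_cast
  simpa [← hv] using rank_add_omega0_le_of_strictMono hchain
    fun n => update_lt_update_iff.2 (ENat.natCast_lt_top n)

theorem omega0_mul_card_le_rank_piecewise [DecidableEq ι] (s : Finset ι) :
    ω * s.card ≤ rank (· < ·) (s.piecewise ⊤ (0 : ι → ℕ∞)) := by
  induction s using Finset.induction_on with
  | empty => simp
  | insert i s hi ih =>
    rw [Finset.card_insert_of_notMem hi, Nat.cast_add_one, mul_add_one, Finset.piecewise_insert]
    exact (add_le_add_left ih _).trans
      (rank_add_omega0_le_rank_update_top (s.piecewise_eq_of_notMem _ _ hi))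

theorem rank_top_eq_omega0_mul_card : rank (· < ·) (⊤ : ι → ℕ∞) = ω * Fintype.card ι := by
  classical
  refine le_antisymm ?_ ?_
  · simpa [ordVal] using rank_le_of_strictMono ordVal_strictMono (⊤ : ι → ℕ∞)
  · simpa using omega0_mul_card_le_rank_piecewise (Finset.univ : Finset ι)

end ENatPi

theorem rank_ideals_nat_pow_general (d : ℕ) :
    (⨆ I : Idl (Fin d → ℕ), Order.succ (rk I)) =
      Ordinal.omega0 * d + 1 := by
  calc ⨆ I : Idl (Fin d → ℕ), Order.succ (rk I)
      = ⨆ I : Idl (Fin d → ℕ), Order.succ (rank (· < ·) (Idl.orderIsoENat I)) := by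
        simp only [rk_eq_rank, OrderIso.rank_apply]
    _ = ⨆ v : Fin d → ℕ∞, Order.succ (rank (· < ·) v) :=
        Idl.orderIsoENat.toEquiv.iSup_comp (g := fun v => Order.succ (rank (· < ·) v))
    _ = Order.succ (rank (· < ·) (⊤ : Fin d → ℕ∞)) := iSup_succ_rank_eq_succ_rank_top
    _ = ω * d + 1 := by
        rw [rank_top_eq_omega0_mul_card, Fintype.card_fin, Order.succ_eq_add_one]

/-- For `d ≥ 1`, the rank of the set of ideals of `ℕ^d` (ordered componentwise)
ordered by inclusion is `ω·d + 1`. -/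
theorem rank_ideals_nat_pow (d : ℕ) (hd : 1 ≤ d) :
    (⨆ I : Idl (Fin d → ℕ), Order.succ (rk I)) =
      Ordinal.omega0 * d + 1 :=
  rank_ideals_nat_pow_general d
end

section
/- Let B = (Q, Σ, δ, q₀, F) be a Büchi automaton, let S = (X, →_Σ, ≤) be a very-WSTS, and let x₀ ∈ X. Then there exists an infinite word w ∈ L(B) ∩ Traces^ω(S, x₀) if and only if there exists q_f ∈ F such that the state (q_f, ⊥) is repeatedly coverable from (q₀, x₀) in the product transition system B × S_⊥. -/
/-- A very-WSTS: a WSTS with strong monotonicity whose completion is a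
deterministic WSTS (the ideals are wqo by inclusion) with strong-strict
monotonicity, and whose ideals have finitely many levels. -/
def VeryWSTS {X A : Type*} [Preorder X] (tr : A → X → X → Prop) : Prop :=
  IsWSTS tr ∧ StrongMonotone tr ∧
  CompDeterministic tr ∧
  (∀ f : ℕ → Set X, (∀ i, IsIdeal (f i)) → ∃ i j : ℕ, i < j ∧ f i ⊆ f j) ∧
  CompStrongStrictMono tr ∧
  (∃ n : ℕ, Lim X n = ∅)

/-- The infinite word `w` is accepted by the Büchi automaton `(Q, A, δ, q₀, F)`:
some infinite run from `q₀` labeled by `w` visits `F` infinitely often. -/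
def BuchiAccept {Q A : Type*} (δ : Q → A → Q → Prop) (q₀ : Q) (F : Set Q)
    (w : ℕ → A) : Prop :=
  ∃ ρ : ℕ → Q, ρ 0 = q₀ ∧ (∀ i, δ (ρ i) (w i) (ρ (i + 1))) ∧
    ∀ n : ℕ, ∃ m : ℕ, n ≤ m ∧ ρ m ∈ F

/-- The transition relation of `S_⊥`: transitions of `S` lifted to `X ∪ {⊥}`,
with no transitions in or out of `⊥`. -/
def trBot {X A : Type*} (tr : A → X → X → Prop) (a : A) :
    WithBot X → WithBot X → Prop :=
  fun x y => ∃ x' y' : X, x = (x' : WithBot X) ∧ y = (y' : WithBot X) ∧ tr a x' y'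

/-- The transition relation of the product `B × S_⊥`, over labels `A × Q`:
`(p, x) →_{(a, r)} (q, y)` iff `(p, a, r) ∈ δ`, `q = r` and `x →_a y`. -/
def prodTr {Q X A : Type*} (δ : Q → A → Q → Prop) (tr : A → X → X → Prop) :
    A × Q → Q × WithBot X → Q × WithBot X → Prop :=
  fun l s t => δ s.1 l.1 l.2 ∧ t.1 = l.2 ∧ trBot tr l.1 s.2 t.2

/-- The ordering of the product `B × S_⊥`: `(p, x) ≤ (q, y)` iff `p = q` and
`x ≤ y` in `X ∪ {⊥}`. -/
def prodLe {Q X : Type*} [Preorder X] :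
    Q × WithBot X → Q × WithBot X → Prop :=
  fun s t => s.1 = t.1 ∧ s.2 ≤ t.2

/-- `t` is repeatedly coverable from `s`: there are `z₀, z₁, …` with
`s →* z₀ →⁺ z₁ →⁺ ⋯` and `zᵢ ≥ t` for every `i`. -/
def RepCoverable {S L : Type*} (step : L → S → S → Prop) (le : S → S → Prop)
    (s t : S) : Prop :=
  ∃ z : ℕ → S, (∃ w : List L, Steps step w s (z 0)) ∧
    (∀ i : ℕ, ∃ w : List L, w ≠ [] ∧ Steps step w (z i) (z (i + 1))) ∧
    ∀ i : ℕ, le t (z i)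

/-- Extract a finite `Steps` segment from an infinite run. -/
lemma run_steps {S L : Type*} (st : L → S → S → Prop) (σ : ℕ → S) (W : ℕ → L)
    (h : ∀ n, st (W n) (σ n) (σ (n + 1))) (k a : ℕ) :
    ∃ w : List L, w.length = k ∧ Steps st w (σ a) (σ (a + k)) := by
  induction k generalizing a with
  | zero => exact ⟨[], rfl, rfl⟩
  | succ k ih =>
    obtain ⟨w, hl, hs⟩ := ih (a + 1)
    exact ⟨W a :: w, by simp [hl],
      ⟨σ (a + 1), h a, by rwa [show a + 1 + k = a + (k + 1) from by omega] at hs⟩⟩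

/-- Glue a chain of finite runs into a single infinite run that keeps revisiting
the chain points. -/
lemma glue_run {S L : Type*} (st : L → S → S → Prop) (s : S) (z : ℕ → S)
    (h0 : ∃ w : List L, Steps st w s (z 0))
    (h : ∀ i, ∃ w : List L, w ≠ [] ∧ Steps st w (z i) (z (i + 1))) :
    ∃ (W : ℕ → L) (σ : ℕ → S), σ 0 = s ∧ (∀ n, st (W n) (σ n) (σ (n + 1))) ∧
      ∀ n, ∃ m, n ≤ m ∧ ∃ i, σ m = z i := by
  obtain ⟨w0, hw0⟩ := h0
  have step : ∀ c : {p : S × ℕ × List L // Steps st p.2.2 p.1 (z p.2.1)},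
      ∃ p : L × {p : S × ℕ × List L // Steps st p.2.2 p.1 (z p.2.1)},
        st p.1 c.1.1 p.2.1.1 ∧
        (c.1.2.2 ≠ [] → p.2.1.2.2.length < c.1.2.2.length) := by
    rintro ⟨⟨x, i, w⟩, hw⟩
    cases w with
    | nil =>
      have hx : x = z i := hw
      obtain ⟨cw, hne, hcw⟩ := h i
      cases cw with
      | nil => exact absurd rfl hne
      | cons a w' =>
        obtain ⟨y, hy1, hy2⟩ := hcw
        subst hx
        exact ⟨(a, ⟨(y, i + 1, w'), hy2⟩), hy1, fun hc => absurd rfl hc⟩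
    | cons a w' =>
      obtain ⟨y, hy1, hy2⟩ := hw
      exact ⟨(a, ⟨(y, i, w'), hy2⟩), hy1, fun _ => Nat.lt_succ_self _⟩
  choose Fn hF1 hF2 using step
  set g : ℕ → {p : S × ℕ × List L // Steps st p.2.2 p.1 (z p.2.1)} :=
    fun n => Nat.rec ⟨(s, 0, w0), hw0⟩ (fun _ c => (Fn c).2) n with hg
  refine ⟨fun n => (Fn (g n)).1, fun n => (g n).1.1, rfl, fun n => hF1 (g n), ?_⟩
  have key : ∀ k n, (g n).1.2.2.length ≤ k → ∃ m, n ≤ m ∧ (g m).1.2.2 = [] := by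
    intro k
    induction k with
    | zero =>
      intro n hn
      exact ⟨n, le_refl n, List.length_eq_zero_iff.mp (Nat.le_zero.mp hn)⟩
    | succ k ih =>
      intro n hn
      by_cases he : (g n).1.2.2 = []
      · exact ⟨n, le_refl n, he⟩
      · have hlt : (g (n + 1)).1.2.2.length < (g n).1.2.2.length := hF2 (g n) he
        obtain ⟨m, hm, he'⟩ := ih (n + 1) (by omega)
        exact ⟨m, le_trans (Nat.le_succ n) hm, he'⟩
  intro n
  obtain ⟨m, hm, he⟩ := key (g n).1.2.2.length n le_rfl
  refine ⟨m, hm, (g m).1.2.1, ?_⟩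
  have h2 := (g m).2
  rw [he] at h2
  exact h2

/-- Pigeonhole: a run in a finite state space that visits `F` infinitely often
visits some particular state of `F` infinitely often. -/
lemma exists_freq {Q : Type*} [Finite Q] (ρ : ℕ → Q) (F : Set Q)
    (h : ∀ n, ∃ m, n ≤ m ∧ ρ m ∈ F) :
    ∃ q ∈ F, ∀ n, ∃ m, n ≤ m ∧ ρ m = q := by
  set N : Set ℕ := {n | ρ n ∈ F} with hN
  have hNinf : N.Infinite := by
    intro hfin
    obtain ⟨b, hb⟩ := hfin.bddAbove
    obtain ⟨m, hm, hmF⟩ := h (b + 1)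
    have := hb hmF
    omega
  haveI : Infinite N := hNinf.to_subtype
  obtain ⟨q, hq⟩ := Finite.exists_infinite_fiber (fun n : N => ρ n)
  have himg : Set.Infinite (Subtype.val '' ((fun n : N => ρ n) ⁻¹' {q})) :=
    (Set.infinite_coe_iff.mp hq).image (Set.injOn_of_injective Subtype.val_injective)
  have hsub : (Subtype.val '' ((fun n : N => ρ n) ⁻¹' {q})) ⊆ {m : ℕ | ρ m ∈ F ∧ ρ m = q} := by
    rintro m ⟨⟨m', hm'⟩, hpre, rfl⟩
    exact ⟨hm', hpre⟩
  obtain ⟨m0, hm0⟩ := himg.nonempty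
  refine ⟨q, ?_, fun n => ?_⟩
  · obtain ⟨hmF, hmq⟩ := hsub hm0
    exact hmq ▸ hmF
  · obtain ⟨m, hmmem, hlt⟩ := himg.exists_gt n
    exact ⟨m, le_of_lt hlt, (hsub hmmem).2⟩

/-- Extract a strictly increasing subsequence of witnesses from a frequency
statement. -/
lemma exists_mono_subseq {P : ℕ → Prop} (freq : ∀ n, ∃ m, n ≤ m ∧ P m) :
    ∃ m : ℕ → ℕ, (∀ i, P (m i)) ∧ ∀ i, m i < m (i + 1) := by
  choose f hf1 hf2 using freq
  refine ⟨fun i => Nat.rec (f 0) (fun _ prev => f (prev + 1)) i, fun i => ?_, fun i => ?_⟩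
  · cases i with
    | zero => exact hf2 0
    | succ i => exact hf2 _
  · exact lt_of_lt_of_le (Nat.lt_succ_self _) (hf1 _)

/-- For a Büchi automaton `B` and a very-WSTS `S`, some infinite word of `L(B)`
is an infinite trace of `S` from `x₀` iff some `(q_f, ⊥)` with `q_f ∈ F` is
repeatedly coverable from `(q₀, x₀)` in the product `B × S_⊥`. -/
theorem buchi_inter_infinite_traces_iff_repCoverable
    {Q X A : Type*} [Finite Q] [Finite A] [Preorder X]
    (δ : Q → A → Q → Prop) (q₀ : Q) (F : Set Q)
    (tr : A → X → X → Prop) (hS : VeryWSTS tr) (x₀ : X) :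
    (∃ w : ℕ → A, BuchiAccept δ q₀ F w ∧ InfTrace tr x₀ w) ↔
    (∃ qf ∈ F, RepCoverable (prodTr δ tr) prodLe
      (q₀, (x₀ : WithBot X)) (qf, (⊥ : WithBot X))) := by
  constructor
  · rintro ⟨w, ⟨ρQ, hQ0, hQstep, hQF⟩, ⟨ρX, hX0, hXstep⟩⟩
    obtain ⟨qf, hqfF, hfreq⟩ := exists_freq ρQ F hQF
    obtain ⟨m, hmP, hmlt⟩ := exists_mono_subseq hfreq
    set σ : ℕ → Q × WithBot X := fun n => (ρQ n, (ρX n : WithBot X)) with hσ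
    have hstep : ∀ n, prodTr δ tr (w n, ρQ (n + 1)) (σ n) (σ (n + 1)) :=
      fun n => ⟨hQstep n, rfl, ρX n, ρX (n + 1), rfl, rfl, hXstep n⟩
    have hσ0 : σ 0 = (q₀, (x₀ : WithBot X)) := by rw [hσ]; simp [hQ0, hX0]
    refine ⟨qf, hqfF, fun i => σ (m i), ?_, fun i => ?_, fun i => ?_⟩
    · obtain ⟨ws, _, hws⟩ := run_steps _ σ _ hstep (m 0) 0
      rw [Nat.zero_add, hσ0] at hws
      exact ⟨ws, hws⟩
    · obtain ⟨ws, hl, hws⟩ := run_steps _ σ _ hstep (m (i + 1) - m i) (m i)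
      have hpos : m i < m (i + 1) := hmlt i
      rw [show m i + (m (i + 1) - m i) = m (i + 1) from by omega] at hws
      refine ⟨ws, ?_, hws⟩
      intro hnil
      rw [hnil] at hl
      simp at hl
      omega
    · exact ⟨(hmP i).symm, bot_le⟩
  · rintro ⟨qf, hqfF, z, h0, hseg, hcov⟩
    obtain ⟨W, σ, hσ0, hstep, hreach⟩ :=
      glue_run (prodTr δ tr) (q₀, (x₀ : WithBot X)) z h0 hseg
    have hbot : ∀ n, ∃ x : X, (σ n).2 = (x : WithBot X) := by
      intro n
      cases n with
      | zero => exact ⟨x₀, by rw [hσ0]⟩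
      | succ n =>
        obtain ⟨_, _, x', y', _, hy, _⟩ := hstep n
        exact ⟨y', hy⟩
    choose ρX hρX using hbot
    refine ⟨fun n => (W n).1, ⟨fun n => (σ n).1, by show (σ 0).1 = q₀; rw [hσ0],
      fun n => ?_, fun n => ?_⟩, ρX, ?_, fun n => ?_⟩
    · show δ (σ n).1 (W n).1 (σ (n + 1)).1
      obtain ⟨hδ, heq, _⟩ := hstep n
      rw [heq]
      exact hδ
    · obtain ⟨m, hm, i, hi⟩ := hreach n
      refine ⟨m, hm, ?_⟩
      show (σ m).1 ∈ F
      have h1 : qf = (z i).1 := (hcov i).1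
      rw [hi]
      exact h1 ▸ hqfF
    · have h1 := hρX 0
      rw [hσ0] at h1
      exact (WithBot.coe_inj.mp h1.symm)
    · obtain ⟨_, _, x', y', hx, hy, htr⟩ := hstep n
      have hx' : x' = ρX n := WithBot.coe_inj.mp (hx.symm.trans (hρX n))
      have hy' : y' = ρX (n + 1) := WithBot.coe_inj.mp (hy.symm.trans (hρX (n + 1)))
      rw [hx', hy'] at htr
      exact htr
end
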